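/- arXiv:2102.12123 — 4 statements merged into one kernel-verified Lean document; each statement's English description precedes it below -/
import Mathlib

section
/- For p, q ∈ (0,1), the Kullback-Leibler divergence from Bernoulli(p) to Bernoulli(q) satisfies D_KL(Ber(p) ‖ Ber(q)) ≤ max{1/(2p(1-p)), 1/(2q(1-q))} · (p-q)². -/
/-! With `M` the maximum on the right, `F t = M (t - p)² - D(p ‖ t)` vanishes at `t = p` and has
derivative `(t - p) (2M - 1 / (t (1 - t)))`. Since `t (1 - t)` is concave, between `p` and `q` it
stays above `min (p (1 - p)) (q (1 - q))`, so the derivative points away from `p` and the mean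
value theorem gives `F q ≥ 0`. -/

open Real Set

noncomputable def bernoulliKL (p q : ℝ) : ℝ :=
  p * log (p / q) + (1 - p) * log ((1 - p) / (1 - q))

lemma bernoulliKL_self {p : ℝ} (hp : p ∈ Ioo (0 : ℝ) 1) : bernoulliKL p p = 0 := by
  simp [bernoulliKL, div_self hp.1.ne', div_self (sub_ne_zero.2 hp.2.ne')]

lemma hasDerivAt_mul_log_div (a : ℝ) {t : ℝ} (ht : t ≠ 0) :
    HasDerivAt (fun s => a * log (a / s)) (-a / t) t := by
  rcases eq_or_ne a 0 with rfl | ha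
  · simpa using hasDerivAt_const t (0 : ℝ)
  have hdiv : HasDerivAt (fun s => a / s) (a * -(t ^ 2)⁻¹) t := by
    simpa [div_eq_mul_inv] using (hasDerivAt_inv ht).const_mul a
  refine ((hdiv.log (div_ne_zero ha ht)).const_mul a).congr_deriv ?_
  field_simp

lemma hasDerivAt_bernoulliKL_right (p : ℝ) {t : ℝ} (ht : t ∈ Ioo (0 : ℝ) 1) :
    HasDerivAt (bernoulliKL p) ((t - p) / (t * (1 - t))) t := by
  have ht₁ : 1 - t ≠ 0 := sub_ne_zero.2 ht.2.ne'
  have hsub : HasDerivAt (fun s : ℝ => 1 - s) (-1) t := by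
    simpa using (hasDerivAt_id t).const_sub 1
  have hright := (hasDerivAt_mul_log_div (1 - p) ht₁).comp t hsub
  refine ((hasDerivAt_mul_log_div p ht.1.ne').add hright).congr_deriv ?_
  field_simp [ht.1.ne']
  ring

lemma mul_one_sub_le_of_mem_uIcc {a b t : ℝ} (ht : t ∈ uIcc a b) :
    a * (1 - a) ≤ t * (1 - t) ∨ b * (1 - b) ≤ t * (1 - t) := by
  wlog hab : a ≤ b generalizing a b
  · exact (this (uIcc_comm a b ▸ ht) (le_of_not_ge hab)).symm
  rw [uIcc_of_le hab] at ht
  -- `t (1 - t) - a (1 - a) = (t - a) (1 - t - a)` and `t (1 - t) - b (1 - b) = (b - t) (t + b - 1)`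
  rcases le_total (t + a) 1 with h | h
  · left; nlinarith [mul_nonneg (sub_nonneg.2 ht.1) (sub_nonneg.2 h)]
  · right; nlinarith [mul_nonneg (sub_nonneg.2 ht.2) (by linarith : (0 : ℝ) ≤ t + b - 1)]

lemma one_div_two_mul_mul_one_sub_le_max {p q t : ℝ} (hp : p ∈ Ioo (0 : ℝ) 1)
    (hq : q ∈ Ioo (0 : ℝ) 1) (ht : t ∈ uIcc p q) :
    1 / (2 * t * (1 - t)) ≤ max (1 / (2 * p * (1 - p))) (1 / (2 * q * (1 - q))) := by
  have hpos : ∀ s ∈ Ioo (0 : ℝ) 1, 0 < 2 * s * (1 - s) := fun s hs => by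
    have := sub_pos.2 hs.2; have := hs.1; positivity
  rcases mul_one_sub_le_of_mem_uIcc ht with h | h
  · exact le_max_of_le_left (one_div_le_one_div_of_le (hpos p hp) (by linarith))
  · exact le_max_of_le_right (one_div_le_one_div_of_le (hpos q hq) (by linarith))

lemma le_of_hasDerivAt_of_mul_sub_nonneg {f f' : ℝ → ℝ} {a b : ℝ}
    (hf : ∀ t ∈ uIcc a b, HasDerivAt f (f' t) t) (hf' : ∀ t ∈ uIcc a b, 0 ≤ f' t * (t - a)) :
    f a ≤ f b := by
  have hcont : ContinuousOn f (uIcc a b) := fun t ht => (hf t ht).continuousAt.continuousWithinAt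
  rcases lt_trichotomy a b with hab | rfl | hba
  · rw [uIcc_of_le hab.le] at hf hf' hcont
    obtain ⟨c, hc, hslope⟩ :=
      exists_hasDerivAt_eq_slope f f' hab hcont fun t ht => hf t (Ioo_subset_Icc_self ht)
    have := hf' c (Ioo_subset_Icc_self hc)
    rw [hslope, div_mul_eq_mul_div, div_nonneg_iff] at this
    rcases this with ⟨h, _⟩ | ⟨_, h⟩ <;> nlinarith [hc.1]
  · exact le_rfl
  · rw [uIcc_of_ge hba.le] at hf hf' hcont
    obtain ⟨c, hc, hslope⟩ :=
      exists_hasDerivAt_eq_slope f f' hba hcont fun t ht => hf t (Ioo_subset_Icc_self ht)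
    have := hf' c (Ioo_subset_Icc_self hc)
    rw [hslope, div_mul_eq_mul_div, div_nonneg_iff] at this
    rcases this with ⟨h, _⟩ | ⟨_, h⟩ <;> nlinarith [hc.2]

/-- For `p, q ∈ (0,1)`, the Kullback-Leibler divergence from `Bernoulli(p)` to `Bernoulli(q)`,
given by `p·log(p/q) + (1-p)·log((1-p)/(1-q))`, is at most
`max{1/(2p(1-p)), 1/(2q(1-q))} · (p-q)²`. -/
theorem bernoulli_klDiv_upper_bound (p q : ℝ) (hp : p ∈ Set.Ioo (0:ℝ) 1)
    (hq : q ∈ Set.Ioo (0:ℝ) 1) :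
    p * Real.log (p / q) + (1 - p) * Real.log ((1 - p) / (1 - q)) ≤
      max (1 / (2 * p * (1 - p))) (1 / (2 * q * (1 - q))) * (p - q) ^ 2 := by
  set M := max (1 / (2 * p * (1 - p))) (1 / (2 * q * (1 - q)))
  have hsub : uIcc p q ⊆ Ioo 0 1 := (ordConnected_Ioo).uIcc_subset hp hq
  have hF : ∀ t ∈ uIcc p q, HasDerivAt (fun s => M * (s - p) ^ 2 - bernoulliKL p s)
      (M * (2 * (t - p)) - (t - p) / (t * (1 - t))) t := fun t ht => by
    have hsq := ((hasDerivAt_id t).sub_const p).pow 2 |>.const_mul M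
    refine (hsq.sub (hasDerivAt_bernoulliKL_right p (hsub ht))).congr_deriv ?_
    simp
  have hF' : ∀ t ∈ uIcc p q, 0 ≤ (M * (2 * (t - p)) - (t - p) / (t * (1 - t))) * (t - p) :=
    fun t ht => by
    obtain ⟨ht₀, ht₁⟩ := hsub ht
    have hM := one_div_two_mul_mul_one_sub_le_max hp hq ht
    have hfactor : (M * (2 * (t - p)) - (t - p) / (t * (1 - t))) * (t - p) =
        2 * (t - p) ^ 2 * (M - 1 / (2 * t * (1 - t))) := by
      field_simp [ht₀.ne', (sub_pos.2 ht₁).ne']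
    rw [hfactor]
    exact mul_nonneg (by positivity) (sub_nonneg.2 hM)
  have hFpq := le_of_hasDerivAt_of_mul_sub_nonneg hF hF'
  simp only [sub_self, bernoulliKL_self hp] at hFpq
  unfold bernoulliKL at hFpq
  linarith
end

section
/- For all real x, the standard normal density satisfies φ(x) ≥ sqrt(2/π) · Φ(x) · (1 - Φ(x)), where φ and Φ are the standard normal pdf and cdf. -/
open MeasureTheory ProbabilityTheory Real Set

noncomputable def stdPhi : ℝ → ℝ := gaussianPDFReal 0 1

lemma stdPhi_eq (t : ℝ) : stdPhi t = (Real.sqrt (2 * π))⁻¹ * rexp (-t ^ 2 / 2) := by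
  simp [stdPhi, gaussianPDFReal]

lemma stdPhi_integrable : Integrable stdPhi := integrable_gaussianPDFReal 0 1

lemma stdPhi_nonneg (t : ℝ) : 0 ≤ stdPhi t := gaussianPDFReal_nonneg 0 1 t

lemma stdPhi_total : ∫ t, stdPhi t = 1 := integral_gaussianPDFReal_eq_one 0 one_ne_zero

lemma cdf_eq (x : ℝ) :
    ((gaussianReal 0 1) (Set.Iic x)).toReal = ∫ t in Iic x, stdPhi t := by
  rw [gaussianReal_apply_eq_integral 0 one_ne_zero]
  exact ENNReal.toReal_ofReal (setIntegral_nonneg measurableSet_Iic fun t _ => stdPhi_nonneg t)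

lemma split (x : ℝ) : (∫ t in Iic x, stdPhi t) + ∫ t in Ioi x, stdPhi t = 1 := by
  have h := integral_add_compl (measurableSet_Iic (a := x)) stdPhi_integrable
  rwa [compl_Iic, stdPhi_total] at h

lemma half : ∫ t in Iic (0:ℝ), stdPhi t = 1 / 2 := by
  have hsym : ∫ t in Ioi (0:ℝ), stdPhi t = ∫ t in Iic (0:ℝ), stdPhi t := by
    have h := integral_comp_neg_Iic (0:ℝ) stdPhi
    rw [neg_zero] at h
    rw [← h]
    exact (setIntegral_congr_fun measurableSet_Iic fun t _ => by simp [stdPhi_eq]).symm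
  have := split 0
  rw [hsym] at this
  linarith

lemma shift_Ioi (x : ℝ) : ∫ t in Ioi x, stdPhi (t - x) = 1 / 2 := by
  have h1 : ∫ t in Ioi x, stdPhi (t - x) = ∫ t, (Ioi (0:ℝ)).indicator stdPhi (t - x) := by
    rw [← integral_indicator measurableSet_Ioi]
    congr 1 with t
    simp [Set.indicator_apply, sub_pos]
  rw [h1, integral_sub_right_eq_self _ x, integral_indicator measurableSet_Ioi]
  have := split 0
  rw [half] at this
  linarith

lemma shift_Iic (x : ℝ) : ∫ t in Iic x, stdPhi (t - x) = 1 / 2 := by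
  have h1 : ∫ t in Iic x, stdPhi (t - x) = ∫ t, (Iic (0:ℝ)).indicator stdPhi (t - x) := by
    rw [← integral_indicator measurableSet_Iic]
    congr 1 with t
    simp [Set.indicator_apply, sub_nonpos]
  rw [h1, integral_sub_right_eq_self _ x, integral_indicator measurableSet_Iic, half]

lemma tail_bound {x : ℝ} (hx : 0 ≤ x) :
    ∫ t in Ioi x, stdPhi t ≤ rexp (-x ^ 2 / 2) * (1 / 2) := by
  have hmono : ∫ t in Ioi x, stdPhi t ≤ ∫ t in Ioi x, rexp (-x ^ 2 / 2) * stdPhi (t - x) := by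
    refine setIntegral_mono_on stdPhi_integrable.integrableOn
      (((stdPhi_integrable.comp_sub_right x).const_mul _).integrableOn) measurableSet_Ioi
      fun t ht => ?_
    rw [stdPhi_eq, stdPhi_eq, ← mul_assoc, mul_comm (rexp (-x ^ 2 / 2)), mul_assoc,
      ← Real.exp_add]
    have ht' : x < t := ht
    refine mul_le_mul_of_nonneg_left (Real.exp_le_exp.mpr ?_) (by positivity)
    nlinarith
  calc ∫ t in Ioi x, stdPhi t ≤ ∫ t in Ioi x, rexp (-x ^ 2 / 2) * stdPhi (t - x) := hmono
    _ = rexp (-x ^ 2 / 2) * ∫ t in Ioi x, stdPhi (t - x) := by rw [integral_const_mul]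
    _ = rexp (-x ^ 2 / 2) * (1 / 2) := by rw [shift_Ioi]

lemma head_bound {x : ℝ} (hx : x ≤ 0) :
    ∫ t in Iic x, stdPhi t ≤ rexp (-x ^ 2 / 2) * (1 / 2) := by
  have hmono : ∫ t in Iic x, stdPhi t ≤ ∫ t in Iic x, rexp (-x ^ 2 / 2) * stdPhi (t - x) := by
    refine setIntegral_mono_on stdPhi_integrable.integrableOn
      (((stdPhi_integrable.comp_sub_right x).const_mul _).integrableOn) measurableSet_Iic
      fun t ht => ?_
    rw [stdPhi_eq, stdPhi_eq, ← mul_assoc, mul_comm (rexp (-x ^ 2 / 2)), mul_assoc,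
      ← Real.exp_add]
    have ht' : t ≤ x := ht
    refine mul_le_mul_of_nonneg_left (Real.exp_le_exp.mpr ?_) (by positivity)
    nlinarith
  calc ∫ t in Iic x, stdPhi t ≤ ∫ t in Iic x, rexp (-x ^ 2 / 2) * stdPhi (t - x) := hmono
    _ = rexp (-x ^ 2 / 2) * ∫ t in Iic x, stdPhi (t - x) := by rw [integral_const_mul]
    _ = rexp (-x ^ 2 / 2) * (1 / 2) := by rw [shift_Iic]

lemma key_const : Real.sqrt (2 / π) * (1 / 2) = (Real.sqrt (2 * π))⁻¹ := by
  have hs2 : Real.sqrt 2 * Real.sqrt 2 = 2 := Real.mul_self_sqrt (by norm_num)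
  have hsπ : 0 < Real.sqrt π := Real.sqrt_pos.mpr Real.pi_pos
  have hs2' : 0 < Real.sqrt 2 := Real.sqrt_pos.mpr (by norm_num)
  rw [Real.sqrt_div (by norm_num : (0:ℝ) ≤ 2) π, Real.sqrt_mul (by norm_num : (0:ℝ) ≤ 2) π,
    mul_inv]
  field_simp
  nlinarith [hs2, hsπ, hs2']

/-- For all real `x`, the standard normal density satisfies
`φ(x) ≥ sqrt(2/π)·Φ(x)·(1-Φ(x))`, where `φ` is the standard normal pdf and
`Φ(x) = P[N(0,1) ≤ x]` the standard normal cdf. -/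
theorem gaussianPDF_ge_cdf_mul_one_sub_cdf (x : ℝ) :
    Real.sqrt (2 / Real.pi) * ((gaussianReal 0 1) (Set.Iic x)).toReal *
      (1 - ((gaussianReal 0 1) (Set.Iic x)).toReal) ≤ gaussianPDFReal 0 1 x := by
  have hc := key_const
  set Φ := ((gaussianReal 0 1) (Set.Iic x)).toReal with hΦ
  have hΦeq : Φ = ∫ t in Iic x, stdPhi t := cdf_eq x
  have hΦ0 : 0 ≤ Φ := ENNReal.toReal_nonneg
  have hΦ1 : Φ ≤ 1 := by
    rw [hΦeq]
    have := split x
    have h2 : 0 ≤ ∫ t in Ioi x, stdPhi t :=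
      setIntegral_nonneg measurableSet_Ioi fun t _ => stdPhi_nonneg t
    linarith
  have hsq : 0 ≤ Real.sqrt (2 / π) := Real.sqrt_nonneg _
  rcases le_or_gt 0 x with hx | hx
  · have h1 : 1 - Φ = ∫ t in Ioi x, stdPhi t := by
      have := split x; rw [← hΦeq] at this; linarith
    have h2 := tail_bound hx
    rw [← h1] at h2
    calc Real.sqrt (2 / π) * Φ * (1 - Φ) ≤ Real.sqrt (2 / π) * 1 * (1 - Φ) := by
          nlinarith [mul_nonneg (mul_nonneg hsq (sub_nonneg.mpr hΦ1)) (sub_nonneg.mpr hΦ1)]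
      _ = Real.sqrt (2 / π) * (1 - Φ) := by ring
      _ ≤ Real.sqrt (2 / π) * (rexp (-x ^ 2 / 2) * (1 / 2)) :=
          mul_le_mul_of_nonneg_left h2 hsq
      _ = Real.sqrt (2 / π) * (1 / 2) * rexp (-x ^ 2 / 2) := by ring
      _ = gaussianPDFReal 0 1 x := by rw [hc, ← stdPhi_eq]; rfl
  · have h2 := head_bound hx.le
    rw [← hΦeq] at h2
    calc Real.sqrt (2 / π) * Φ * (1 - Φ) ≤ Real.sqrt (2 / π) * Φ * 1 := by
          nlinarith [mul_nonneg (mul_nonneg hsq hΦ0) hΦ0]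
      _ = Real.sqrt (2 / π) * Φ := by ring
      _ ≤ Real.sqrt (2 / π) * (rexp (-x ^ 2 / 2) * (1 / 2)) :=
          mul_le_mul_of_nonneg_left h2 hsq
      _ = Real.sqrt (2 / π) * (1 / 2) * rexp (-x ^ 2 / 2) := by ring
      _ = gaussianPDFReal 0 1 x := by rw [hc, ← stdPhi_eq]; rfl
end

section
/- Let X = (X₀, (X_e)_{e∈E'}) be independent random variables, A an event determined by X, and F the σ-algebra generated by (X_e)_{e∈E'}. Then (1/2)·E[P[A changes when X₀ is resampled | F]] = Var(1_A) − E[Var(1_A | F)] = Var(P[A | F]). Consequently, for any randomized algorithm determining A, Var(P[A|F]) ≤ (1/2)·Σ_{e∈E'} Rev(e)·Infl(e), where Rev(e) is the revealment of X_e and Infl(e) the resampling influence. -/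
open MeasureTheory ProbabilityTheory

/-!
Write `A_y = {x | (x, y) ∈ A}` and `q(y) = P₀(A_y)`. Since the coordinates are independent,
`g = P[A | F]` is `q(y)`, and conditionally on `y` the pair formed by `X₀` and its resampled
copy is i.i.d., so `A` changes with probability `q(y)(1 - q(y)) + (1 - q(y))q(y)`. Thus half the
resampling influence of `X₀` is `E[g(1 - g)]`, which is the expected conditional variance of `1_A`
because `1_A² = 1_A`. The law of total variance gives the second identity, and substituting both
into the OSSS bound cancels the `Infl(0)` term.
-/

section Product

variable {Ω₀ Ω₁ : Type*} [MeasurableSpace Ω₀] [MeasurableSpace Ω₁]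
  {P₀ : Measure Ω₀} {P₁ : Measure Ω₁}

theorem condExp_comap_snd_prod {E : Type*} [NormedAddCommGroup E] [NormedSpace ℝ E]
    [CompleteSpace E] [IsProbabilityMeasure P₀] [IsFiniteMeasure P₁] {F : Ω₀ × Ω₁ → E}
    (hF_meas : StronglyMeasurable F) (hF : Integrable F (P₀.prod P₁)) :
    (P₀.prod P₁)[F | MeasurableSpace.comap (Prod.snd : Ω₀ × Ω₁ → Ω₁) inferInstance]
      =ᵐ[P₀.prod P₁] fun p => ∫ x, F (x, p.2) ∂P₀ := by
  refine (ae_eq_condExp_of_forall_setIntegral_eq measurable_snd.comap_le hF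
    (fun s _ _ => (hF.integral_prod_right.comp_snd P₀).integrableOn) ?_ ?_).symm
  · rintro s ⟨B, -, rfl⟩ -
    have hrestrict : (P₀.prod P₁).restrict (Prod.snd ⁻¹' B) = P₀.prod (P₁.restrict B) := by
      rw [← Set.univ_prod, ← Measure.prod_restrict, Measure.restrict_univ]
    rw [hrestrict, integral_fun_snd (fun y => ∫ x, F (x, y) ∂P₀), probReal_univ, one_smul,
      integral_prod_symm _ (hF.mono_measure (hrestrict ▸ Measure.restrict_le_self))]
  · exact ((hF_meas.integral_prod_left (f := Function.curry F)).comp_measurable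
      (comap_measurable Prod.snd)).aestronglyMeasurable

theorem condExp_indicator_comap_snd_prod [IsProbabilityMeasure P₀] [IsFiniteMeasure P₁]
    {A : Set (Ω₀ × Ω₁)} (hA : MeasurableSet A) :
    (P₀.prod P₁)[A.indicator (fun _ => (1 : ℝ)) |
        MeasurableSpace.comap (Prod.snd : Ω₀ × Ω₁ → Ω₁) inferInstance]
      =ᵐ[P₀.prod P₁] fun p => P₀.real ((fun x => (x, p.2)) ⁻¹' A) := by
  filter_upwards [condExp_comap_snd_prod (stronglyMeasurable_const.indicator hA)
    ((integrable_const (1 : ℝ)).indicator hA)] with p hp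
  rw [hp, ← integral_indicator_one (measurable_prodMk_right hA)]
  rfl

theorem prod_self_setOf_not_iff [SFinite P₀] {S : Set Ω₀} (hS : MeasurableSet S) :
    (P₀.prod P₀) {q | ¬(q.1 ∈ S ↔ q.2 ∈ S)} = 2 * (P₀ S * P₀ Sᶜ) := by
  have hsplit : {q : Ω₀ × Ω₀ | ¬(q.1 ∈ S ↔ q.2 ∈ S)} = S ×ˢ Sᶜ ∪ Sᶜ ×ˢ S := by
    ext q; by_cases h₁ : q.1 ∈ S <;> by_cases h₂ : q.2 ∈ S <;> simp [h₁, h₂]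
  have hdisj : Disjoint (S ×ˢ Sᶜ) (Sᶜ ×ˢ S) := Set.disjoint_prod.mpr (Or.inl disjoint_compl_right)
  rw [hsplit, measure_union hdisj (hS.compl.prod hS), Measure.prod_prod, Measure.prod_prod,
    mul_comm (P₀ Sᶜ), two_mul]

theorem prod_prod_setOf_resample_fst [SFinite P₀] [SFinite P₁] {A : Set (Ω₀ × Ω₁)}
    (hA : MeasurableSet A) :
    ((P₀.prod P₁).prod P₀) {p | ¬(p.1 ∈ A ↔ (p.2, p.1.2) ∈ A)} =
      ∫⁻ y, 2 * (P₀ ((fun x => (x, y)) ⁻¹' A) * P₀ ((fun x => (x, y)) ⁻¹' A)ᶜ) ∂P₁ := by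
  have hD : MeasurableSet {p : (Ω₀ × Ω₁) × Ω₀ | ¬(p.1 ∈ A ↔ (p.2, p.1.2) ∈ A)} :=
    ((measurable_fst hA).iff ((measurable_snd.prodMk measurable_fst.snd) hA)).compl
  rw [Measure.prod_apply hD, lintegral_prod_symm _ (measurable_measure_prodMk_left hD).aemeasurable]
  refine lintegral_congr fun y => ?_
  have hAy := measurable_prodMk_right (y := y) hA
  rw [← prod_self_setOf_not_iff hAy, Measure.prod_apply]
  · rfl
  · exact ((measurable_fst hAy).iff (measurable_snd hAy)).compl

theorem integral_condExp_indicator_comap_snd_mul_one_sub [IsProbabilityMeasure P₀]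
    [IsFiniteMeasure P₁] {A : Set (Ω₀ × Ω₁)} (hA : MeasurableSet A) :
    ∫ p, (P₀.prod P₁)[A.indicator (fun _ => (1 : ℝ)) |
          MeasurableSpace.comap (Prod.snd : Ω₀ × Ω₁ → Ω₁) inferInstance] p *
        (1 - (P₀.prod P₁)[A.indicator (fun _ => (1 : ℝ)) |
          MeasurableSpace.comap (Prod.snd : Ω₀ × Ω₁ → Ω₁) inferInstance] p) ∂(P₀.prod P₁) =
      ∫ y, P₀.real ((fun x => (x, y)) ⁻¹' A) * (1 - P₀.real ((fun x => (x, y)) ⁻¹' A)) ∂P₁ := by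
  have hsnd := integral_fun_snd (μ := P₀) (ν := P₁)
    fun y => P₀.real ((fun x => (x, y)) ⁻¹' A) * (1 - P₀.real ((fun x => (x, y)) ⁻¹' A))
  rw [probReal_univ, one_smul] at hsnd
  rw [← hsnd]
  refine integral_congr_ae ?_
  filter_upwards [condExp_indicator_comap_snd_prod (P₁ := P₁) hA] with p hp
  rw [hp]

theorem measureReal_prod_prod_setOf_resample_fst [IsProbabilityMeasure P₀] [IsFiniteMeasure P₁]
    {A : Set (Ω₀ × Ω₁)} (hA : MeasurableSet A) :
    ((P₀.prod P₁).prod P₀).real {p | ¬(p.1 ∈ A ↔ (p.2, p.1.2) ∈ A)} =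
      2 * ∫ y, P₀.real ((fun x => (x, y)) ⁻¹' A) * (1 - P₀.real ((fun x => (x, y)) ⁻¹' A)) ∂P₁ := by
  have hmeas : Measurable fun y =>
      2 * (P₀ ((fun x => (x, y)) ⁻¹' A) * P₀ ((fun x => (x, y)) ⁻¹' A)ᶜ) :=
    measurable_const.mul ((measurable_measure_prodMk_right hA).mul
      (measurable_measure_prodMk_right hA.compl))
  rw [measureReal_def, prod_prod_setOf_resample_fst hA,
    ← integral_toReal hmeas.aemeasurable (ae_of_all _ fun y => by finiteness),
    ← integral_const_mul]
  refine integral_congr_ae (ae_of_all _ fun y => ?_)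
  simp only [ENNReal.toReal_mul, ENNReal.toReal_ofNat, ← measureReal_def,
    probReal_compl_eq_one_sub (measurable_prodMk_right hA)]

end Product

section TotalVariance

variable {Ω : Type*} {m m₀ : MeasurableSpace Ω} {μ : Measure Ω} {A : Set Ω}

theorem condVar_indicator_ae_eq (hm : m ≤ m₀) [IsFiniteMeasure μ] (hA : MeasurableSet A) :
    Var[A.indicator (fun _ => (1 : ℝ)); μ | m] =ᵐ[μ]
      μ[A.indicator (fun _ => (1 : ℝ)) | m] * (1 - μ[A.indicator (fun _ => (1 : ℝ)) | m]) := by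
  have hsq : A.indicator (fun _ => (1 : ℝ)) ^ 2 = A.indicator (fun _ => (1 : ℝ)) := by
    ext ω; by_cases hω : ω ∈ A <;> simp [hω]
  filter_upwards [condVar_ae_eq_condExp_sq_sub_sq_condExp hm
    (memLp_indicator_const 2 hA (1 : ℝ) (Or.inr (measure_ne_top μ A)))] with ω hω
  rw [hω, hsq]
  simp only [Pi.sub_apply, Pi.pow_apply, Pi.mul_apply, Pi.one_apply]
  ring

theorem integral_sq_sub_condExp_indicator (hm : m ≤ m₀) [IsProbabilityMeasure μ]
    (hA : MeasurableSet A) :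
    ∫ ω, (μ[A.indicator (fun _ => (1 : ℝ)) | m] ω - μ.real A) ^ 2 ∂μ =
      ∫ ω, (A.indicator (fun _ => (1 : ℝ)) ω - μ.real A) ^ 2 ∂μ -
        ∫ ω, μ[A.indicator (fun _ => (1 : ℝ)) | m] ω *
          (1 - μ[A.indicator (fun _ => (1 : ℝ)) | m] ω) ∂μ := by
  have htotal := integral_condVar_add_variance_condExp hm
    (memLp_indicator_const 2 hA (1 : ℝ) (Or.inr (measure_ne_top μ A)))
  rw [integral_congr_ae (condVar_indicator_ae_eq hm hA),
    variance_eq_integral (stronglyMeasurable_condExp.mono hm).aemeasurable,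
    variance_eq_integral (measurable_const.indicator hA).aemeasurable,
    integral_condExp hm, integral_indicator_const _ hA, smul_eq_mul, mul_one] at htotal
  rw [← htotal]
  simp only [Pi.mul_apply, Pi.sub_apply, Pi.one_apply]
  ring

end TotalVariance

/-- Let `X = (X₀, (X_e)_{e∈E'})` be independent, realized on a product probability space
`Ω₀ × Ω₁` with law `μ = P₀ ⊗ P₁`, where `X₀` lives on the factor `Ω₀` and `(X_e)_{e∈E'}`
on the factor `Ω₁`; `F = σ(Prod.snd)` is the σ-algebra generated by the second factor and
`g = P[A | F]`. Then:
`(1/2)·E[P[A changes when X₀ is resampled | F]] = ∫ g(1-g) dμ = E[Var(1_A|F)]`,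
`Var(P[A|F]) = Var(1_A) − E[Var(1_A|F)]` (law of total variance), and consequently,
given the OSSS inequality
`Var(1_A) ≤ (1/2)(Infl(0) + Σ_{e∈E'} Rev(e)·Infl(e))` for an algorithm determining `A`
(bounding the revealment of `X₀` by 1), one gets
`Var(P[A|F]) ≤ (1/2)·Σ_{e∈E'} Rev(e)·Infl(e)`. -/
theorem condexp_variance_osss {Ω₀ Ω₁ : Type*} [MeasurableSpace Ω₀] [MeasurableSpace Ω₁]
    (P₀ : Measure Ω₀) (P₁ : Measure Ω₁)
    [IsProbabilityMeasure P₀] [IsProbabilityMeasure P₁]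
    (A : Set (Ω₀ × Ω₁)) (hA : MeasurableSet A)
    {ι : Type*} (E' : Finset ι) (Rev Infl : ι → ℝ)
    (μ : Measure (Ω₀ × Ω₁)) (hμ : μ = P₀.prod P₁)
    (g : Ω₀ × Ω₁ → ℝ)
    (hg : g = μ[A.indicator (fun _ => (1:ℝ))|MeasurableSpace.comap Prod.snd inferInstance])
    (Infl0 : ℝ)
    (hInfl0 : Infl0 = (((P₀.prod P₁).prod P₀) {p : (Ω₀ × Ω₁) × Ω₀ |
      ¬(p.1 ∈ A ↔ (p.2, p.1.2) ∈ A)}).toReal)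
    (hOSSS : ∫ x, (A.indicator (fun _ => (1:ℝ)) x - (μ A).toReal) ^ 2 ∂μ ≤
      (1/2) * (Infl0 + ∑ e ∈ E', Rev e * Infl e)) :
    (1/2) * Infl0 = ∫ x, g x * (1 - g x) ∂μ ∧
    (∫ x, (g x - (μ A).toReal) ^ 2 ∂μ) =
      (∫ x, (A.indicator (fun _ => (1:ℝ)) x - (μ A).toReal) ^ 2 ∂μ) -
        ∫ x, g x * (1 - g x) ∂μ ∧
    (∫ x, (g x - (μ A).toReal) ^ 2 ∂μ) ≤ (1/2) * ∑ e ∈ E', Rev e * Infl e := by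
  subst hμ hg hInfl0
  have hinfl := measureReal_prod_prod_setOf_resample_fst (P₀ := P₀) (P₁ := P₁) hA
  have hslice := integral_condExp_indicator_comap_snd_mul_one_sub (P₀ := P₀) (P₁ := P₁) hA
  have htotal := integral_sq_sub_condExp_indicator (μ := P₀.prod P₁)
    (m := MeasurableSpace.comap Prod.snd inferInstance) measurable_snd.comap_le hA
  rw [measureReal_def] at hinfl htotal
  refine ⟨by rw [hinfl, hslice]; ring, htotal, by linarith⟩
end

section
/- Suppose a sequence a_R > 0 satisfies: (i) a_R ≤ R^{−η*+o(1)} for some η* > 0, and (ii) a_R · Σ_{v∈Λ_R∩ℤ^d} a_{⌊|v|_∞/2⌋}² ≥ c > 0 for all R ≥ 1, where a_0 := 1. Then η* ≤ d/3. -/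
/-!
Suppose `η > d/3` and pick `d/3 < α < η`, so that `a k ≤ k^(-α)` for large `k`. Along dyadic
radii, the shell `2^n < |v|_∞ ≤ 2^(n+1)` has at most `(5 ⬝ 2^n)^d` points, each contributing
`O(2^(-2αn))`, so the box sum `S(2^n)` is `O(n ⬝ max(1, 2^(d-2α))^n)`. Multiplied by
`a (2^n) ≤ 2^(-αn)` this tends to `0`, because `α > 0` and `d - 3α < 0`; this contradicts
`a (2^n) ⬝ S(2^n) ≥ c > 0`.
-/

open Filter Finset Topology

noncomputable def latticeBox (d R : ℕ) : Finset (Fin d → ℤ) :=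
  Icc (fun _ => -(R : ℤ)) (fun _ => (R : ℤ))

noncomputable def boxSum (g : ℕ → ℝ) (d R : ℕ) : ℝ :=
  ∑ v ∈ latticeBox d R, g (univ.sup fun i => (v i).natAbs)

lemma card_latticeBox (d R : ℕ) : #(latticeBox d R) = (2 * R + 1) ^ d := by
  rw [latticeBox, Pi.card_Icc, prod_const, Int.card_Icc, card_univ, Fintype.card_fin]
  congr 1
  omega

lemma mem_latticeBox_iff {d R : ℕ} {v : Fin d → ℤ} :
    v ∈ latticeBox d R ↔ (univ.sup fun i => (v i).natAbs) ≤ R := by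
  simp only [latticeBox, mem_Icc, Pi.le_def, Finset.sup_le_iff, mem_univ, true_imp_iff,
    ← forall_and]
  exact forall_congr' fun i => by omega

lemma latticeBox_mono (d : ℕ) {s r : ℕ} (h : s ≤ r) : latticeBox d s ⊆ latticeBox d r :=
  fun _ hv => mem_latticeBox_iff.2 ((mem_latticeBox_iff.1 hv).trans h)

lemma boxSum_nonneg {g : ℕ → ℝ} (hg : ∀ m, 0 ≤ g m) (d R : ℕ) : 0 ≤ boxSum g d R :=
  sum_nonneg fun _ _ => hg _

lemma boxSum_le_add {g : ℕ → ℝ} {d s r : ℕ} {B : ℝ} (hB : ∀ m, s < m → g m ≤ B) (hB₀ : 0 ≤ B)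
    (hsr : s ≤ r) : boxSum g d r ≤ boxSum g d s + (2 * r + 1) ^ d * B := by
  rw [boxSum, boxSum, ← sum_sdiff (latticeBox_mono d hsr), add_comm]
  gcongr
  calc ∑ v ∈ latticeBox d r \ latticeBox d s, g (univ.sup fun i => (v i).natAbs)
      ≤ #(latticeBox d r \ latticeBox d s) • B := sum_le_card_nsmul _ _ _ fun v hv =>
        hB _ (not_le.1 fun h => (mem_sdiff.1 hv).2 (mem_latticeBox_iff.2 h))
    _ ≤ (2 * r + 1) ^ d * B := by
        rw [nsmul_eq_mul]
        gcongr
        exact_mod_cast (card_le_card sdiff_subset).trans (card_latticeBox d r).le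

lemma le_add_mul_pow_of_succ_le {u : ℕ → ℝ} {C θ : ℝ} {J : ℕ} (hC : 0 ≤ C) (hθ : 0 ≤ θ)
    (h : ∀ n ≥ J, u (n + 1) ≤ u n + C * θ ^ n) :
    ∀ n ≥ J, u n ≤ u J + C * n * max 1 θ ^ n := by
  intro n hn
  induction n, hn using Nat.le_induction with
  | base => exact le_add_of_nonneg_right (by positivity)
  | succ n hn ih =>
    have hθn : θ ^ n ≤ max 1 θ ^ n := pow_le_pow_left₀ hθ (le_max_right _ _) n
    have hMn : max 1 θ ^ n ≤ max 1 θ ^ (n + 1) := pow_le_pow_right₀ (le_max_left _ _) n.le_succ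
    have := h n hn
    push_cast
    nlinarith [mul_nonneg hC (Nat.cast_nonneg n : (0 : ℝ) ≤ n)]

lemma rpow_neg_le_of_two_pow_le {α x : ℝ} {n : ℕ} (hα : 0 ≤ α) (hx : (2 : ℝ) ^ n ≤ 2 * x) :
    x ^ (-α) ≤ 2 ^ α * (2 ^ (-α)) ^ n := by
  have h2n : (0 : ℝ) < 2 ^ n / 2 := by positivity
  calc x ^ (-α) ≤ (2 ^ n / 2) ^ (-α) :=
        Real.rpow_le_rpow_of_nonpos h2n (by linarith) (neg_nonpos.2 hα)
    _ = 2 ^ α * (2 ^ (-α)) ^ n := by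
        rw [Real.div_rpow (by positivity) zero_le_two, ← Real.rpow_pow_comm zero_le_two,
          Real.rpow_neg zero_le_two α, div_inv_eq_mul, mul_comm]

lemma tendsto_pow_mul_add_mul_pow {σ M A C : ℝ} (hσ : 0 ≤ σ) (hM : 1 ≤ M) (hσM : σ * M < 1) :
    Tendsto (fun n : ℕ => σ ^ n * (A + C * n * M ^ n)) atTop (𝓝 0) := by
  have hσ₁ : σ < 1 := lt_of_le_of_lt (le_mul_of_one_le_right hσ hM) hσM
  have hA := (tendsto_pow_atTop_nhds_zero_of_lt_one hσ hσ₁).const_mul A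
  have hC := (tendsto_self_mul_const_pow_of_lt_one (by positivity) hσM).const_mul C
  convert hA.add hC using 1
  · ext n
    rw [mul_pow]
    ring
  · simp

section DyadicDecay

variable {a : ℕ → ℝ} {α : ℝ} {R₀ d : ℕ}

lemma sq_div_two_le_of_two_pow_lt (ha : ∀ k, 0 ≤ a k) (hα : 0 ≤ α)
    (hR₀ : ∀ k ≥ R₀, a k ≤ (k : ℝ) ^ (-α)) {n m : ℕ} (hn : 2 * R₀ ≤ 2 ^ n) (hm : 2 ^ n < m) :
    a (m / 2) ^ 2 ≤ (2 ^ α * (2 ^ (-α)) ^ n) ^ 2 := by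
  have hk : 2 ^ n ≤ 2 * (m / 2) := by omega
  gcongr
  · exact ha _
  calc a (m / 2) ≤ ((m / 2 : ℕ) : ℝ) ^ (-α) := hR₀ _ (by omega)
    _ ≤ 2 ^ α * (2 ^ (-α)) ^ n := rpow_neg_le_of_two_pow_le hα (by exact_mod_cast hk)

lemma boxSum_two_pow_succ_le (ha : ∀ k, 0 ≤ a k) (hα : 0 ≤ α)
    (hR₀ : ∀ k ≥ R₀, a k ≤ (k : ℝ) ^ (-α)) {n : ℕ} (hn : 2 * R₀ ≤ 2 ^ n) :
    boxSum (fun m => a (m / 2) ^ 2) d (2 ^ (n + 1)) ≤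
      boxSum (fun m => a (m / 2) ^ 2) d (2 ^ n) +
        5 ^ d * (2 ^ α) ^ 2 * (2 ^ d * ((2 : ℝ) ^ (-α)) ^ 2) ^ n := by
  refine (boxSum_le_add (fun m hm => sq_div_two_le_of_two_pow_lt ha hα hR₀ hn hm) (sq_nonneg _)
    (Nat.pow_le_pow_right two_pos n.le_succ)).trans ?_
  rw [add_le_add_iff_left]
  calc _ ≤ (5 * 2 ^ n) ^ d * (2 ^ α * (2 ^ (-α)) ^ n) ^ 2 := by
        gcongr
        push_cast [pow_succ]
        linarith [one_le_pow₀ (M₀ := ℝ) one_le_two (n := n)]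
    _ = 5 ^ d * (2 ^ α) ^ 2 * (2 ^ d * ((2 : ℝ) ^ (-α)) ^ 2) ^ n := by
        ring

theorem tendsto_mul_boxSum_two_pow (ha : ∀ k, 0 ≤ a k) (hα : (d : ℝ) / 3 < α)
    (hR₀ : ∀ k ≥ R₀, a k ≤ (k : ℝ) ^ (-α)) :
    Tendsto (fun n => a (2 ^ n) * boxSum (fun m => a (m / 2) ^ 2) d (2 ^ n)) atTop (𝓝 0) := by
  set σ : ℝ := 2 ^ (-α)
  set θ : ℝ := 2 ^ d * σ ^ 2
  set C : ℝ := 5 ^ d * (2 ^ α) ^ 2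
  set u := fun n => boxSum (fun m => a (m / 2) ^ 2) d (2 ^ n)
  have hα₀ : 0 < α := by linarith [show (0 : ℝ) ≤ d / 3 by positivity]
  have hσ : 0 ≤ σ := by positivity
  have hσ₁ : σ < 1 := Real.rpow_lt_one_of_one_lt_of_neg one_lt_two (by linarith)
  have hσθ : σ * θ < 1 := calc
    σ * θ = 2 ^ (-α * (3 : ℕ) + d) := by
      rw [Real.rpow_add two_pos, Real.rpow_mul_natCast zero_le_two, Real.rpow_natCast]
      ring
    _ < 1 := Real.rpow_lt_one_of_one_lt_of_neg one_lt_two (by push_cast; linarith)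
  have hR₀_le : ∀ n ≥ R₀ + 1, 2 * R₀ ≤ 2 ^ n := fun n hn => calc
    2 * R₀ ≤ 2 ^ (R₀ + 1) := by rw [pow_succ]; linarith [R₀.lt_two_pow_self]
    _ ≤ 2 ^ n := Nat.pow_le_pow_right two_pos hn
  have hu : ∀ n ≥ R₀ + 1, u n ≤ u (R₀ + 1) + C * n * max 1 θ ^ n :=
    le_add_mul_pow_of_succ_le (by positivity) (by positivity)
      fun n hn => boxSum_two_pow_succ_le ha hα₀.le hR₀ (hR₀_le n hn)
  refine squeeze_zero' (Eventually.of_forall fun n => mul_nonneg (ha _)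
    (boxSum_nonneg (fun _ => sq_nonneg _) _ _)) ?_
    (tendsto_pow_mul_add_mul_pow (A := u (R₀ + 1)) (C := C) hσ (le_max_left 1 θ) ?_)
  · filter_upwards [eventually_ge_atTop (R₀ + 1)] with n hn
    have ha2n : a (2 ^ n) ≤ σ ^ n := calc
      a (2 ^ n) ≤ ((2 ^ n : ℕ) : ℝ) ^ (-α) := hR₀ _ (by linarith [hR₀_le n hn])
      _ = σ ^ n := by push_cast; exact (Real.rpow_pow_comm zero_le_two _ _).symm
    calc a (2 ^ n) * u n ≤ σ ^ n * u n :=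
          mul_le_mul_of_nonneg_right ha2n (boxSum_nonneg (fun _ => sq_nonneg _) _ _)
      _ ≤ σ ^ n * (u (R₀ + 1) + C * n * max 1 θ ^ n) := by gcongr; exact hu n hn
  · rw [mul_max_of_nonneg _ _ hσ, mul_one]
    exact max_lt hσ₁ hσθ

end DyadicDecay

theorem exponent_comparison_general (d : ℕ) (a : ℕ → ℝ) (ha : ∀ R, 0 < a R)
    (η c : ℝ) (hc : 0 < c)
    (hupper : ∀ ε > (0:ℝ), ∃ R₀ : ℕ, ∀ R ≥ R₀, a R ≤ (R : ℝ) ^ (-η + ε))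
    (hlower : ∀ R : ℕ, 1 ≤ R →
      c ≤ a R * ∑ v ∈ Finset.Icc (fun _ : Fin d => -(R:ℤ)) (fun _ : Fin d => (R:ℤ)),
        (a ((Finset.univ.sup fun i => (v i).natAbs) / 2)) ^ 2) :
    η ≤ d / 3 := by
  by_contra! h
  obtain ⟨α, hdα, hαη⟩ := exists_between h
  obtain ⟨R₀, hR₀⟩ := hupper (η - α) (sub_pos.2 hαη)
  have hlim := tendsto_mul_boxSum_two_pow (fun k => (ha k).le) hdα fun k hk => by
    convert hR₀ k hk using 2
    ring
  have : c ≤ 0 := ge_of_tendsto hlim (Eventually.of_forall fun n => hlower _ Nat.one_le_two_pow)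
  linarith

/-- Exponent comparison: if `a_R > 0` satisfies `a_R ≤ R^{−η*+o(1)}` and
`a_R · Σ_{v ∈ Λ_R ∩ ℤ^d} a_{⌊|v|_∞/2⌋}² ≥ c > 0` for all `R ≥ 1` (with `a_0 = 1`),
then `η* ≤ d/3`. -/
theorem exponent_comparison (d : ℕ) (hd : 1 ≤ d) (a : ℕ → ℝ) (ha : ∀ R, 0 < a R)
    (ha0 : a 0 = 1) (η c : ℝ) (hη : 0 < η) (hc : 0 < c)
    (hupper : ∀ ε > (0:ℝ), ∃ R₀ : ℕ, ∀ R ≥ R₀, a R ≤ (R : ℝ) ^ (-η + ε))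
    (hlower : ∀ R : ℕ, 1 ≤ R →
      c ≤ a R * ∑ v ∈ Finset.Icc (fun _ : Fin d => -(R:ℤ)) (fun _ : Fin d => (R:ℤ)),
        (a ((Finset.univ.sup fun i => (v i).natAbs) / 2)) ^ 2) :
    η ≤ d / 3 :=
  exponent_comparison_general d a ha η c hc hupper hlower
end
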